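/- For the Pareto-type tail 1 - F(x) = A x^{-α}(1 + B x^{-β} + o(x^{-β})) as x → ∞ (A > 0, α > 0, β > 0, B ≠ 0), and x_n with A m_n x_n^{-α} = δ fixed (δ > 0), the approximation error satisfies F(x_n)^{m_n} - exp(-δ) = O(m_n^{-(β/α) ∧ 1} ). -/

import Mathlib

/-!
Put `t_n = 1 - F(x_n)`. Since `A x_n^{-α} = δ / m_n`, the second-order tail expansion at `x_n`
reads `m_n t_n - δ = (δ B + o(1)) x_n^{-β}`, and `x_n^{-β}` is a constant times `m_n^{-β/α}`.
Then `F(x_n)^{m_n} = exp (m_n log (1 - t_n))` with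
`m_n log (1 - t_n) + δ = (m_n t_n - δ) + O(m_n t_n²) = O(m_n^{-β/α}) + O(m_n^{-1})`,
and `exp` is Lipschitz near `-δ`.
-/

open Filter Topology Real Asymptotics

lemma abs_log_one_sub_add_le {t : ℝ} (ht : |t| ≤ 1 / 2) : |log (1 - t) + t| ≤ 2 * t ^ 2 := by
  have h := abs_log_sub_add_sum_range_le (show |t| < 1 by linarith) 1
  simp only [Finset.range_one, Finset.sum_singleton, zero_add, pow_one, Nat.cast_zero,
    div_one] at h
  calc |log (1 - t) + t| = |t + log (1 - t)| := by rw [add_comm]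
    _ ≤ |t| ^ 2 / (1 - |t|) := h
    _ ≤ 2 * t ^ 2 := by
      rw [div_le_iff₀ (by linarith), sq_abs]
      nlinarith [sq_nonneg t]

lemma abs_exp_sub_exp_le {a b : ℝ} (h : |a - b| ≤ 1) :
    |exp a - exp b| ≤ 2 * exp b * |a - b| := by
  have : exp a - exp b = exp b * (exp (a - b) - 1) := by
    rw [mul_sub, ← exp_add, add_sub_cancel, mul_one]
  rw [this, abs_mul, abs_of_pos (exp_pos b), mul_assoc, mul_left_comm]
  exact mul_le_mul_of_nonneg_left (abs_exp_sub_one_le h) (exp_pos b).le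

lemma abs_one_sub_pow_sub_exp_neg_le {t δ : ℝ} {m : ℕ} (ht : |t| ≤ 1 / 2)
    (hε : |m * t - δ| + 2 * m * t ^ 2 ≤ 1) :
    |(1 - t) ^ m - exp (-δ)| ≤ 2 * exp (-δ) * (|m * t - δ| + 2 * m * t ^ 2) := by
  have hpos : 0 < 1 - t := by linarith [le_abs_self t]
  have hlog : |m * log (1 - t) - -δ| ≤ |m * t - δ| + 2 * m * t ^ 2 :=
    calc |m * log (1 - t) - -δ| = |m * (log (1 - t) + t) - (m * t - δ)| := by ring_nf
      _ ≤ m * |log (1 - t) + t| + |m * t - δ| :=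
        (abs_sub _ _).trans_eq (by rw [abs_mul, Nat.abs_cast])
      _ ≤ m * (2 * t ^ 2) + |m * t - δ| := by gcongr; exact abs_log_one_sub_add_le ht
      _ = |m * t - δ| + 2 * m * t ^ 2 := by ring
  rw [← exp_log hpos, ← exp_nat_mul]
  exact (abs_exp_sub_exp_le (hlog.trans hε)).trans (by gcongr)

theorem isBigO_one_sub_pow_sub_exp_neg {ι : Type*} {l : Filter ι} {m : ι → ℕ} {t g : ι → ℝ}
    {δ : ℝ} (hm : Tendsto m l atTop) (hg : Tendsto g l (𝓝 0))
    (hmt : (fun i => m i * t i - δ) =O[l] g) (hinv : (fun i => (m i : ℝ)⁻¹) =O[l] g) :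
    (fun i => (1 - t i) ^ m i - exp (-δ)) =O[l] g := by
  have hm' : Tendsto (fun i => (m i : ℝ)) l atTop := tendsto_natCast_atTop_atTop.comp hm
  have hm0 : ∀ᶠ i in l, (m i : ℝ) ≠ 0 := (hm'.eventually_gt_atTop 0).mono fun _ h => h.ne'
  have hmt_lim : Tendsto (fun i => m i * t i) l (𝓝 δ) := by
    simpa using (hmt.trans_tendsto hg).add_const δ
  have ht : Tendsto t l (𝓝 0) := by
    have := hmt_lim.mul (tendsto_inv_atTop_zero.comp hm')
    rw [mul_zero] at this
    exact this.congr' (hm0.mono fun i h => by simp [field])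
  have hsq : (fun i => 2 * m i * t i ^ 2) =O[l] g := by
    have := ((hmt_lim.pow 2).const_mul 2).isBigO_one ℝ |>.mul hinv
    simp only [one_mul] at this
    exact this.congr' (hm0.mono fun i h => by simp [field]) EventuallyEq.rfl
  have hε : (fun i => |m i * t i - δ| + 2 * m i * t i ^ 2) =O[l] g := hmt.abs_left.add hsq
  refine IsBigO.trans ?_ hε
  refine IsBigO.of_bound (2 * exp (-δ)) ?_
  have ht_small : ∀ᶠ i in l, |t i| ≤ 1 / 2 := by
    simpa using ht.abs.eventually_le_const (by norm_num : |(0 : ℝ)| < 1 / 2)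
  filter_upwards [ht_small, (hε.trans_tendsto hg).eventually_le_const one_pos] with i hti hεi
  rw [Real.norm_eq_abs, Real.norm_of_nonneg (by positivity)]
  exact abs_one_sub_pow_sub_exp_neg_le hti hεi

theorem isBigO_mul_one_sub_sub_of_tendsto_tail {ι : Type*} {l : Filter ι} {F : ℝ → ℝ}
    {A α β B δ : ℝ} (hA : 0 < A) (hα : 0 < α) (hδ : 0 < δ)
    (htail : Tendsto (fun X : ℝ =>
        X ^ (α + β) * (1 - F X - A * X ^ (-α) * (1 + B * X ^ (-β)))) atTop (𝓝 0))
    {μ x : ι → ℝ} (hμ : Tendsto μ l atTop) (hx : ∀ i, x i = (A * μ i / δ) ^ (1 / α)) :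
    (fun i => μ i * (1 - F (x i)) - δ) =O[l] fun i => μ i ^ (-(β / α)) := by
  have hx_top : Tendsto x l atTop := by
    have hc : Tendsto (fun i => A * μ i / δ) l atTop :=
      (hμ.const_mul_atTop hA).atTop_div_const hδ
    rw [funext hx]
    exact (tendsto_rpow_atTop (one_div_pos.mpr hα)).comp hc
  set r := fun i => x i ^ (α + β) * (1 - F (x i) - A * x i ^ (-α) * (1 + B * x i ^ (-β)))
  have hr : Tendsto r l (𝓝 0) := htail.comp hx_top
  have hcoeff : Tendsto (fun i => (δ * B + δ / A * r i) * (A / δ) ^ (-(β / α))) l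
      (𝓝 ((δ * B + δ / A * 0) * (A / δ) ^ (-(β / α)))) :=
    ((hr.const_mul _).const_add _).mul_const _
  have hbound := (hcoeff.isBigO_one ℝ).mul (isBigO_refl (fun i => μ i ^ (-(β / α))) l)
  simp only [one_mul] at hbound
  refine hbound.congr' ?_ EventuallyEq.rfl
  filter_upwards [hμ.eventually_gt_atTop 0] with i hμi
  have hc : 0 < A * μ i / δ := by positivity
  have hxi : 0 < x i := by rw [hx i]; positivity
  have hxα : x i ^ α = A * μ i / δ := by rw [hx i, one_div, rpow_inv_rpow hc.le hα.ne']
  have hxβ : x i ^ (-β) = (A / δ) ^ (-(β / α)) * μ i ^ (-(β / α)) := by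
    rw [hx i, ← rpow_mul hc.le, ← mul_rpow (by positivity) hμi.le, mul_div_right_comm]
    ring_nf
  rw [mul_assoc, ← hxβ]
  simp only [r, rpow_add hxi, rpow_neg hxi.le, hxα]
  field_simp
  ring

lemma isBigO_rpow_rpow_of_le {ι : Type*} {l : Filter ι} {u : ι → ℝ} (hu : Tendsto u l atTop)
    {a b : ℝ} (hab : a ≤ b) : (fun i => u i ^ a) =O[l] fun i => u i ^ b :=
  IsBigO.of_bound' <| (hu.eventually_ge_atTop 1).mono fun i hi => by
    have hi0 : 0 ≤ u i := zero_le_one.trans hi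
    rw [Real.norm_of_nonneg (rpow_nonneg hi0 a), Real.norm_of_nonneg (rpow_nonneg hi0 b)]
    exact rpow_le_rpow_of_exponent_le hi hab

lemma Asymptotics.IsBigO.exists_pos_forall_abs_le_mul {f g : ℕ → ℝ} (h : f =O[atTop] g)
    (hg : ∀ n, 0 ≤ g n) :
    ∃ C > (0 : ℝ), ∃ N : ℕ, ∀ n ≥ N, |f n| ≤ C * g n := by
  obtain ⟨C, hC, hfg⟩ := h.exists_pos
  obtain ⟨N, hN⟩ := eventually_atTop.mp hfg.bound
  exact ⟨C, hC, N, fun n hn => by simpa [abs_of_nonneg (hg n)] using hN n hn⟩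

theorem stmt15_general (F : ℝ → ℝ) (A α β B δ : ℝ)
    (hA : 0 < A) (hα : 0 < α) (hβ : 0 < β) (hδ : 0 < δ)
    (htail : Tendsto (fun X : ℝ =>
        X ^ (α + β) * (1 - F X - A * X ^ (-α) * (1 + B * X ^ (-β)))) atTop (𝓝 0))
    (m : ℕ → ℕ) (hm : Tendsto m atTop atTop)
    (x : ℕ → ℝ) (hx : ∀ n, x n = (A * (m n : ℝ) / δ) ^ (1 / α)) :
    ∃ C > (0 : ℝ), ∃ N : ℕ, ∀ n ≥ N,
      |(F (x n)) ^ (m n) - Real.exp (-δ)|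
        ≤ C * (m n : ℝ) ^ (-(min (β / α) 1)) := by
  set γ := min (β / α) 1
  have hμ : Tendsto (fun n => (m n : ℝ)) atTop atTop := tendsto_natCast_atTop_atTop.comp hm
  have hγ : 0 < γ := lt_min (div_pos hβ hα) one_pos
  have hmt := isBigO_mul_one_sub_sub_of_tendsto_tail hA hα hδ htail hμ hx
  have hinv : (fun n => (m n : ℝ)⁻¹) =O[atTop] fun n => (m n : ℝ) ^ (-γ) := by
    simpa only [rpow_neg_one] using
      isBigO_rpow_rpow_of_le hμ (neg_le_neg (min_le_right (β / α) 1))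
  have hγ_lim : Tendsto (fun n => (m n : ℝ) ^ (-γ)) atTop (𝓝 0) :=
    (tendsto_rpow_neg_atTop hγ).comp hμ
  have hpoisson := isBigO_one_sub_pow_sub_exp_neg hm hγ_lim
    (hmt.trans (isBigO_rpow_rpow_of_le hμ (neg_le_neg (min_le_left _ _)))) hinv
  simp only [sub_sub_cancel] at hpoisson
  exact hpoisson.exists_pos_forall_abs_le_mul fun n => rpow_nonneg (Nat.cast_nonneg _) _

/-- Hall-class second-order rate. If
`1 - F(x) = A x^{-α}(1 + B x^{-β} + o(x^{-β}))` as `x → ∞` (`A, α, β > 0`, `B ≠ 0`),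
`m_n → ∞` and `x_n = (A m_n/δ)^{1/α}` (so `A m_n x_n^{-α} ≡ δ > 0`), then
`|F(x_n)^{m_n} - e^{-δ}| ≤ C m_n^{-min(β/α,1)}` eventually, for some `C > 0`. -/
theorem stmt15 (F : ℝ → ℝ) (A α β B δ : ℝ)
    (hA : 0 < A) (hα : 0 < α) (hβ : 0 < β) (hB : B ≠ 0) (hδ : 0 < δ)
    (hF01 : ∀ x, F x ∈ Set.Icc (0 : ℝ) 1)
    (htail : Tendsto (fun X : ℝ =>
        X ^ (α + β) * (1 - F X - A * X ^ (-α) * (1 + B * X ^ (-β)))) atTop (𝓝 0))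
    (m : ℕ → ℕ) (hm : Tendsto m atTop atTop)
    (x : ℕ → ℝ) (hx : ∀ n, x n = (A * (m n : ℝ) / δ) ^ (1 / α)) :
    ∃ C > (0 : ℝ), ∃ N : ℕ, ∀ n ≥ N,
      |(F (x n)) ^ (m n) - Real.exp (-δ)|
        ≤ C * (m n : ℝ) ^ (-(min (β / α) 1)) :=
  stmt15_general F A α β B δ hA hα hβ hδ htail m hm x hx
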